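/- For every n ≥ 3, the star K_{1, n−1} on n vertices satisfies c(K_{1, n−1}) = 1, i.e., the coalition count of the star with n − 1 leaves equals 1. -/

import Mathlib

open scoped Classical

/-- A dominating set (as a finset): every vertex outside `S` has a neighbor in `S`. -/
def IsDomSet {V : Type*} (G : SimpleGraph V) (S : Finset V) : Prop :=
  ∀ v, v ∉ S → ∃ u ∈ S, G.Adj u v

/-- Two (distinct) sets form a coalition: neither dominates, but their union does. -/
def IsCoalition {V : Type*} (G : SimpleGraph V) (A B : Finset V) : Prop :=
  A ≠ B ∧ ¬ IsDomSet G A ∧ ¬ IsDomSet G B ∧ IsDomSet G (A ∪ B)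

/-- A coalition partition (c-partition) of the vertex set of `G`. -/
def IsCPartition {V : Type*} [Fintype V] (G : SimpleGraph V) (π : Finset (Finset V)) : Prop :=
  (∀ A ∈ π, A.Nonempty) ∧
  (∀ A ∈ π, ∀ B ∈ π, A ≠ B → Disjoint A B) ∧
  (∀ v : V, ∃ A ∈ π, v ∈ A) ∧
  (∀ A ∈ π, (∃ v, A = {v} ∧ IsDomSet G A) ∨ ∃ B ∈ π, IsCoalition G A B)

/-- Number of distinct (unordered) coalitions in the partition `π`. -/
noncomputable def cpCount {V : Type*} [Fintype V] (G : SimpleGraph V)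
    (π : Finset (Finset V)) : ℕ :=
  ((π ×ˢ π).filter (fun p => IsCoalition G p.1 p.2)).card / 2

/-- The coalition count `c(G)`: maximum number of distinct coalitions over c-partitions. -/
noncomputable def coalitionCount {V : Type*} [Fintype V] (G : SimpleGraph V) : ℕ :=
  sSup {k | ∃ π, IsCPartition G π ∧ k = cpCount G π}

/-- The coalition number `C(G)`: maximum order of a c-partition. -/
noncomputable def coalitionNumber {V : Type*} [Fintype V] (G : SimpleGraph V) : ℕ :=
  sSup {k | ∃ π, IsCPartition G π ∧ k = π.card}

/-- The coalition graph `CG(G, π)`. -/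
def coalitionGraph {V : Type*} (G : SimpleGraph V) (π : Finset (Finset V)) :
    SimpleGraph {A // A ∈ π} where
  Adj A B := IsCoalition G A.1 B.1
  symm := by
    constructor
    rintro A B ⟨h1, h2, h3, h4⟩
    exact ⟨fun h => h1 h.symm, h3, h2, by rwa [Finset.union_comm]⟩
  loopless := by
    constructor
    rintro A ⟨h1, -⟩
    exact h1 rfl

/-- The set of full vertices (vertices of degree `n - 1`). -/
noncomputable def fullVertices {V : Type*} [Fintype V] (G : SimpleGraph V) : Finset V :=
  Finset.univ.filter (fun v => G.degree v = Fintype.card V - 1)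

/-- The domatic number: maximum order of a partition into dominating sets. -/
noncomputable def domaticNumber {V : Type*} [Fintype V] (G : SimpleGraph V) : ℕ :=
  sSup {k | ∃ P : Finset (Finset V),
    (∀ A ∈ P, A.Nonempty) ∧
    (∀ A ∈ P, ∀ B ∈ P, A ≠ B → Disjoint A B) ∧
    (∀ v : V, ∃ A ∈ P, v ∈ A) ∧
    (∀ A ∈ P, IsDomSet G A) ∧ k = P.card}

/-- The independence number of `G`. -/
noncomputable def indepNumber {V : Type*} [Fintype V] (G : SimpleGraph V) : ℕ :=
  sSup {k | ∃ s : Finset V, (∀ a ∈ s, ∀ b ∈ s, ¬ G.Adj a b) ∧ k = s.card}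

/-- The star `K_{1, n-1}` on `Fin n`: vertex `0` is the center, adjacent to all others. -/
def starGraph (n : ℕ) : SimpleGraph (Fin n) where
  Adj a b := a ≠ b ∧ ((a : ℕ) = 0 ∨ (b : ℕ) = 0)
  symm := by constructor; rintro a b ⟨h1, h2⟩; exact ⟨h1.symm, h2.symm⟩
  loopless := by constructor; rintro a ⟨h, -⟩; exact h rfl

/-! In the star every set containing the centre dominates, and a set avoiding the centre dominates
only if it contains every leaf. So the two sets of any coalition together make up exactly the set of
leaves, and in a partition a union of two blocks determines the two blocks; hence a c-partition has
at most one coalition. The partition `{0}, {1}, {2, …, n - 1}` has one. -/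

section CPartition

variable {V : Type*} {G : SimpleGraph V}

lemma IsCoalition.symm {A B : Finset V} (h : IsCoalition G A B) : IsCoalition G B A :=
  ⟨h.1.symm, h.2.2.1, h.2.1, by rw [Finset.union_comm]; exact h.2.2.2⟩

variable [Fintype V] {π : Finset (Finset V)}

lemma IsCPartition.eq_or_eq_of_subset_union (hπ : IsCPartition G π) {A B C : Finset V}
    (hA : A ∈ π) (hB : B ∈ π) (hC : C ∈ π) (hCAB : (C : Set V) ⊆ ↑A ∪ ↑B) :
    C = A ∨ C = B := by
  by_contra! hne
  obtain ⟨v, hv⟩ := hπ.1 C hC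
  rcases hCAB hv with hvA | hvB
  · exact Finset.disjoint_left.mp (hπ.2.1 C hC A hA hne.1) hv hvA
  · exact Finset.disjoint_left.mp (hπ.2.1 C hC B hB hne.2) hv hvB

lemma IsCPartition.cpCount_le_one_of_union_eq (hπ : IsCPartition G π) (U : Set V)
    (hU : ∀ A ∈ π, ∀ B ∈ π, IsCoalition G A B → (↑A ∪ ↑B : Set V) = U) :
    cpCount G π ≤ 1 := by
  unfold cpCount
  set F := (π ×ˢ π).filter (fun p => IsCoalition G p.1 p.2)
  rcases F.eq_empty_or_nonempty with hF | ⟨⟨A, B⟩, hAB⟩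
  · simp [hF]
  simp only [F, Finset.mem_filter, Finset.mem_product] at hAB
  obtain ⟨⟨hA, hB⟩, hcoal⟩ := hAB
  have hsub : F ⊆ {(A, B), (B, A)} := by
    rintro ⟨C, D⟩ hCD
    simp only [F, Finset.mem_filter, Finset.mem_product] at hCD
    obtain ⟨⟨hC, hD⟩, hcoal'⟩ := hCD
    have hunion : (↑C ∪ ↑D : Set V) = ↑A ∪ ↑B :=
      (hU C hC D hD hcoal').trans (hU A hA B hB hcoal).symm
    have hC' := hπ.eq_or_eq_of_subset_union hA hB hC (hunion ▸ Set.subset_union_left)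
    have hD' := hπ.eq_or_eq_of_subset_union hA hB hD (hunion ▸ Set.subset_union_right)
    rcases hC' with rfl | rfl <;> rcases hD' with rfl | rfl <;> simp_all [IsCoalition]
  have := (Finset.card_le_card hsub).trans Finset.card_le_two
  omega

lemma one_le_cpCount_of_isCoalition {A B : Finset V} (hA : A ∈ π) (hB : B ∈ π)
    (h : IsCoalition G A B) : 1 ≤ cpCount G π := by
  unfold cpCount
  have hsub : {(A, B), (B, A)} ⊆ (π ×ˢ π).filter (fun p => IsCoalition G p.1 p.2) := by
    intro p hp
    simp only [Finset.mem_insert, Finset.mem_singleton] at hp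
    rcases hp with rfl | rfl
    · simp [hA, hB, h]
    · simp [hA, hB, h.symm]
  have hcard : ({(A, B), (B, A)} : Finset _).card = 2 := Finset.card_pair (by simp [h.1])
  have := Finset.card_le_card hsub
  omega

lemma isCPartition_singleton_insert_pair [DecidableEq V] {c : V} {A B : Finset V}
    (hc : IsDomSet G {c}) (hAB : IsCoalition G A B) (hA : A.Nonempty) (hB : B.Nonempty)
    (hdisj : Disjoint A B) (hcA : c ∉ A) (hcB : c ∉ B)
    (hcover : ∀ v, v ≠ c → v ∈ A ∨ v ∈ B) :
    IsCPartition G {{c}, A, B} := by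
  refine ⟨?_, ?_, ?_, ?_⟩
  · simp only [Finset.mem_insert, Finset.mem_singleton]
    rintro _ (rfl | rfl | rfl) <;> simp [hA, hB]
  · simp only [Finset.mem_insert, Finset.mem_singleton]
    rintro _ (rfl | rfl | rfl) _ (rfl | rfl | rfl) hne <;>
      simp_all [Finset.disjoint_singleton_left, Finset.disjoint_singleton_right, disjoint_comm]
  · intro v
    by_cases hv : v = c
    · exact ⟨{c}, by simp, by simp [hv]⟩
    · rcases hcover v hv with h | h
      · exact ⟨A, by simp, h⟩
      · exact ⟨B, by simp, h⟩
  · simp only [Finset.mem_insert, Finset.mem_singleton]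
    rintro _ (rfl | rfl | rfl)
    · exact Or.inl ⟨c, rfl, hc⟩
    · exact Or.inr ⟨B, by simp, hAB⟩
    · exact Or.inr ⟨A, by simp, hAB.symm⟩

end CPartition

section Star

variable {n : ℕ} [NeZero n]

lemma starGraph_isDomSet_iff (hn : 1 < n) {S : Finset (Fin n)} :
    IsDomSet (starGraph n) S ↔ 0 ∈ S ∨ ∀ v ≠ 0, v ∈ S := by
  constructor
  · intro hS
    by_contra! h
    obtain ⟨h0, v, hv0, hvS⟩ := h
    obtain ⟨u, huS, -, hu | hv⟩ := hS v hvS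
    · exact h0 ((Fin.ext hu : u = 0) ▸ huS)
    · exact hv0 (Fin.ext hv)
  · rintro (h0 | hall) v hv
    · exact ⟨0, h0, fun h => hv (h ▸ h0), Or.inl rfl⟩
    · have hv0 : v = 0 := by by_contra h; exact hv (hall v h)
      have h1 : (⟨1, hn⟩ : Fin n) ≠ 0 := fun h => by simpa using congrArg Fin.val h
      exact ⟨⟨1, hn⟩, hall _ h1, hv0 ▸ h1, Or.inr (by simp [hv0])⟩

lemma starGraph_coe_union_of_isCoalition (hn : 1 < n) {A B : Finset (Fin n)}
    (h : IsCoalition (starGraph n) A B) : (↑A ∪ ↑B : Set (Fin n)) = {0}ᶜ := by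
  obtain ⟨-, hA, hB, hAB⟩ := h
  rw [starGraph_isDomSet_iff hn] at hA hB hAB
  ext v
  simp only [Set.mem_union, Finset.mem_coe, Set.mem_compl_iff, Set.mem_singleton_iff]
  constructor
  · rintro (hv | hv) rfl
    exacts [hA (Or.inl hv), hB (Or.inl hv)]
  · intro hv
    simp only [Finset.mem_union] at hAB
    rcases hAB with (h0 | h0) | hall
    exacts [absurd (Or.inl h0) hA, absurd (Or.inl h0) hB, hall v hv]

lemma starGraph_cpCount_le_one (hn : 1 < n) {π : Finset (Finset (Fin n))}
    (hπ : IsCPartition (starGraph n) π) : cpCount (starGraph n) π ≤ 1 :=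
  hπ.cpCount_le_one_of_union_eq {0}ᶜ fun _ _ _ _ h => starGraph_coe_union_of_isCoalition hn h

end Star

section StarPartition

variable (m : ℕ)

lemma two_mem_univ_sdiff_zero_one : (2 : Fin (m + 3)) ∈ Finset.univ \ {0, 1} := by
  simp [Fin.ext_iff, Nat.mod_eq_of_lt]

lemma starGraph_isCoalition_one_rest :
    IsCoalition (starGraph (m + 3)) {1} (Finset.univ \ {0, 1}) := by
  obtain ⟨h20, h21⟩ : (2 : Fin (m + 3)) ≠ 0 ∧ (2 : Fin (m + 3)) ≠ 1 := by
    simpa using two_mem_univ_sdiff_zero_one m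
  have h10 : (1 : Fin (m + 3)) ≠ 0 := by simp
  simp only [IsCoalition, starGraph_isDomSet_iff (by omega : 1 < m + 3), not_or, not_forall]
  refine ⟨fun h => ?_, ⟨by simp [h10.symm], 2, h20, by simp [h21]⟩,
    ⟨by simp, 1, h10, by simp⟩, Or.inr fun v hv => ?_⟩
  · have h1 : (1 : Fin (m + 3)) ∉ Finset.univ \ {0, 1} := by simp
    exact h1 (h ▸ Finset.mem_singleton_self 1)
  · simp only [Finset.mem_union]
    by_cases hv1 : v = 1 <;> simp [hv, hv1]

lemma starGraph_isCPartition_zero_one_rest :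
    IsCPartition (starGraph (m + 3)) {{0}, {1}, Finset.univ \ {0, 1}} := by
  refine isCPartition_singleton_insert_pair ?_ (starGraph_isCoalition_one_rest m)
    (Finset.singleton_nonempty 1) ⟨2, two_mem_univ_sdiff_zero_one m⟩ ?_ ?_ ?_ ?_
  · exact (starGraph_isDomSet_iff (by omega)).mpr (Or.inl (Finset.mem_singleton_self 0))
  · simp
  · simp
  · simp
  · intro v hv
    by_cases hv1 : v = 1 <;> simp [hv, hv1]

end StarPartition

/-- For every `n ≥ 3`, the star `K_{1, n-1}` satisfies `c(K_{1, n-1}) = 1`. -/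
theorem stmt_14 (n : ℕ) (hn : 3 ≤ n) : coalitionCount (starGraph n) = 1 := by
  obtain ⟨m, rfl⟩ : ∃ m, n = m + 3 := ⟨n - 3, by omega⟩
  have hπ := starGraph_isCPartition_zero_one_rest m
  have hcount : cpCount (starGraph (m + 3)) {{0}, {1}, Finset.univ \ {0, 1}} = 1 :=
    le_antisymm (starGraph_cpCount_le_one (by omega) hπ)
      (one_le_cpCount_of_isCoalition (by simp) (by simp) (starGraph_isCoalition_one_rest m))
  refine IsGreatest.csSup_eq ⟨⟨_, hπ, hcount.symm⟩, ?_⟩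
  rintro k ⟨π, hπ', rfl⟩
  exact starGraph_cpCount_le_one (by omega) hπ'
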